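/- arXiv:2506.02815 — 2 statements merged into one kernel-verified Lean document; each statement's English description precedes it below -/
import Mathlib

section
/- Let A be a real symmetric positive definite N×N matrix, let Φ be a real N×n matrix with linearly independent columns, and set K = ΦᵀAΦ. For any f ∈ ℝᴺ, the BFEM posterior mean m⋆ = Φ K⁻¹ Φᵀ f is the unique vector w in the column space of Φ satisfying the Galerkin equations Φᵀ A w = Φᵀ f. In other words, the BFEM posterior mean coincides with the standard FEM (Galerkin) solution. -/
open Matrix

/-!
The stiffness matrix `K = ΦᵀAΦ` is a congruence of the positive definite `A` by an injective
`Φ`, hence positive definite and invertible. For `w = Φ c` the Galerkin equations read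
`K c = Φᵀ f`, so their only solution in the column space of `Φ` is `Φ K⁻¹ Φᵀ f`.
-/

namespace Matrix

variable {m n R : Type*} [Fintype m] [Fintype n]

lemma PosDef.transpose_mul_mul_same [CommRing R] [PartialOrder R] [StarRing R] [TrivialStar R]
    {A : Matrix m m R} {Φ : Matrix m n R} (hA : A.PosDef) (hΦ : Function.Injective Φ.mulVec) :
    (Φᵀ * A * Φ).PosDef := by
  simpa only [conjTranspose_eq_transpose_of_trivial] using hA.conjTranspose_mul_mul_same hΦ

variable [DecidableEq n] [CommRing R]

lemma mulVec_eq_iff_eq_nonsing_inv_mulVec {K : Matrix n n R} (hK : IsUnit K.det) (c b : n → R) :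
    K *ᵥ c = b ↔ c = K⁻¹ *ᵥ b := by
  constructor
  · rintro rfl
    rw [mulVec_mulVec, nonsing_inv_mul K hK, one_mulVec]
  · rintro rfl
    rw [mulVec_mulVec, mul_nonsing_inv K hK, one_mulVec]

lemma transpose_mulVec_mulVec_mulVec_eq_iff {A : Matrix m m R} {Φ : Matrix m n R}
    (hK : IsUnit (Φᵀ * A * Φ).det) (c b : n → R) :
    Φᵀ *ᵥ (A *ᵥ (Φ *ᵥ c)) = b ↔ c = (Φᵀ * A * Φ)⁻¹ *ᵥ b := by
  rw [mulVec_mulVec, mulVec_mulVec, ← mulVec_eq_iff_eq_nonsing_inv_mulVec hK]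

end Matrix

theorem bfem_posterior_mean_is_galerkin_general
    (N n : ℕ)
    (A : Matrix (Fin N) (Fin N) ℝ) (hApd : A.PosDef)
    (Φ : Matrix (Fin N) (Fin n) ℝ) (hΦ : Function.Injective Φ.mulVec)
    (K : Matrix (Fin n) (Fin n) ℝ) (hK : K = Φᵀ * A * Φ)
    (f : Fin N → ℝ)
    (m : Fin N → ℝ) (hm : m = (Φ * K⁻¹ * Φᵀ) *ᵥ f) :
    (∃ c : Fin n → ℝ, m = Φ *ᵥ c) ∧
      Φᵀ *ᵥ (A *ᵥ m) = Φᵀ *ᵥ f ∧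
      ∀ w : Fin N → ℝ, (∃ c : Fin n → ℝ, w = Φ *ᵥ c) →
        Φᵀ *ᵥ (A *ᵥ w) = Φᵀ *ᵥ f → w = m := by
  subst hK
  have hKdet : IsUnit (Φᵀ * A * Φ).det :=
    (isUnit_iff_isUnit_det _).mp (hApd.transpose_mul_mul_same hΦ).isUnit
  have galerkin := transpose_mulVec_mulVec_mulVec_eq_iff hKdet
  have hm_coeffs : m = Φ *ᵥ ((Φᵀ * A * Φ)⁻¹ *ᵥ (Φᵀ *ᵥ f)) := by
    rw [hm, ← mulVec_mulVec, ← mulVec_mulVec]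
  refine ⟨⟨_, hm_coeffs⟩, ?_, ?_⟩
  · rw [hm_coeffs]
    exact (galerkin _ _).mpr rfl
  · rintro w ⟨c, rfl⟩ hw
    rw [hm_coeffs, ← (galerkin c _).mp hw]

/-- With `A` symmetric positive definite, `Φ` of full column rank
and `K = ΦᵀAΦ`, for any `f` the BFEM posterior mean `m⋆ = Φ K⁻¹ Φᵀ f` lies in
the column space of `Φ`, satisfies the Galerkin equations `Φᵀ A m⋆ = Φᵀ f`,
and is the unique such vector: it coincides with the standard FEM (Galerkin)
solution. -/
theorem bfem_posterior_mean_is_galerkin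
    (N n : ℕ)
    (A : Matrix (Fin N) (Fin N) ℝ) (hAsymm : A.IsSymm) (hApd : A.PosDef)
    (Φ : Matrix (Fin N) (Fin n) ℝ) (hΦ : Function.Injective Φ.mulVec)
    (K : Matrix (Fin n) (Fin n) ℝ) (hK : K = Φᵀ * A * Φ)
    (f : Fin N → ℝ)
    (m : Fin N → ℝ) (hm : m = (Φ * K⁻¹ * Φᵀ) *ᵥ f) :
    (∃ c : Fin n → ℝ, m = Φ *ᵥ c) ∧
      Φᵀ *ᵥ (A *ᵥ m) = Φᵀ *ᵥ f ∧
      ∀ w : Fin N → ℝ, (∃ c : Fin n → ℝ, w = Φ *ᵥ c) →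
        Φᵀ *ᵥ (A *ᵥ w) = Φᵀ *ᵥ f → w = m :=
  bfem_posterior_mean_is_galerkin_general N n A hApd Φ hΦ K hK f m hm
end

section
/- Let A be a real symmetric positive definite N×N matrix, let Φ be a real N×n matrix with linearly independent columns, set K = ΦᵀAΦ and S = A⁻¹ − Φ K⁻¹ Φᵀ. Then: (i) S·A·Φ = 0, so every vector in the column space of Φ lies in the kernel of SA; (ii) SA is idempotent, i.e., (SA)² = SA; and (iii) for every v ∈ ℝᴺ with ΦᵀA v = 0 one has SA v = v. Hence SA is the projection onto the A-orthogonal complement of the column space of Φ, and the BFEM posterior covariance carries uncertainty only in the space A-orthogonal to the FEM basis. -/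
open Matrix

/-!
Put `P = Φ K⁻¹ Φᵀ A`, the Galerkin (Ritz) projection: it is the `A`-orthogonal projection onto
the column space of `Φ`, since `P Φ = Φ` and `P v = 0` whenever `Φᵀ A v = 0`. As `S A = 1 - P`,
all three claims are the corresponding facts for the complementary projection `1 - P`. The only
analytic input is that `K` is invertible, which holds because `K` is positive definite.
-/

namespace Matrix

section GalerkinProjection

variable {R m n : Type*} [CommRing R] [Fintype m] [Fintype n] [DecidableEq n]

noncomputable def galerkinProjection (A : Matrix m m R) (Φ : Matrix m n R) : Matrix m m R :=
  Φ * (Φᵀ * A * Φ)⁻¹ * Φᵀ * A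

variable {A : Matrix m m R} {Φ : Matrix m n R}

theorem galerkinProjection_mul_basis (hK : IsUnit (Φᵀ * A * Φ).det) :
    galerkinProjection A Φ * Φ = Φ := by
  rw [galerkinProjection, Matrix.mul_assoc (Φ * _), Matrix.mul_assoc (Φ * _),
    Matrix.mul_assoc Φ, nonsing_inv_mul _ hK, Matrix.mul_one]

theorem isIdempotentElem_galerkinProjection (hK : IsUnit (Φᵀ * A * Φ).det) :
    IsIdempotentElem (galerkinProjection A Φ) := by
  rw [IsIdempotentElem]
  nth_rw 2 [galerkinProjection]
  simp only [← Matrix.mul_assoc, galerkinProjection_mul_basis hK]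
  rfl

theorem galerkinProjection_mulVec_eq_zero {v : m → R} (hv : Φᵀ *ᵥ (A *ᵥ v) = 0) :
    galerkinProjection A Φ *ᵥ v = 0 := by
  simp only [galerkinProjection, ← mulVec_mulVec, hv, mulVec_zero]

end GalerkinProjection

theorem isUnit_det_transpose_mul_mul_of_posDef {m n : Type*} [Fintype m] [Fintype n]
    [DecidableEq n] {A : Matrix m m ℝ} (hA : A.PosDef) {Φ : Matrix m n ℝ}
    (hΦ : Function.Injective Φ.mulVec) : IsUnit (Φᵀ * A * Φ).det := by
  have hK := hA.conjTranspose_mul_mul_same hΦ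
  rw [conjTranspose_eq_transpose_of_trivial] at hK
  exact hK.det_pos.ne'.isUnit

end Matrix

theorem bfem_covariance_projection_general
    (N n : ℕ)
    (A : Matrix (Fin N) (Fin N) ℝ) (hApd : A.PosDef)
    (Φ : Matrix (Fin N) (Fin n) ℝ) (hΦ : Function.Injective Φ.mulVec)
    (K : Matrix (Fin n) (Fin n) ℝ) (hK : K = Φᵀ * A * Φ)
    (S : Matrix (Fin N) (Fin N) ℝ) (hS : S = A⁻¹ - Φ * K⁻¹ * Φᵀ) :
    S * A * Φ = 0 ∧
      (S * A) * (S * A) = S * A ∧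
      ∀ v : Fin N → ℝ, Φᵀ *ᵥ (A *ᵥ v) = 0 → (S * A) *ᵥ v = v := by
  have hKdet := isUnit_det_transpose_mul_mul_of_posDef hApd hΦ
  have hSA : S * A = 1 - galerkinProjection A Φ := by
    rw [hS, hK, Matrix.sub_mul, nonsing_inv_mul _ hApd.det_pos.ne'.isUnit, galerkinProjection]
  refine ⟨?_, ?_, fun v hv => ?_⟩
  · rw [hSA, Matrix.sub_mul, Matrix.one_mul, galerkinProjection_mul_basis hKdet, sub_self]
  · rw [hSA]
    exact (isIdempotentElem_galerkinProjection hKdet).one_sub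
  · rw [hSA, sub_mulVec, one_mulVec, galerkinProjection_mulVec_eq_zero hv, sub_zero]

/-- With `A` symmetric positive definite, `Φ` of full column rank,
`K = ΦᵀAΦ` and `S = A⁻¹ − Φ K⁻¹ Φᵀ`, one has (i) `S·A·Φ = 0`, (ii) `SA` is
idempotent, and (iii) `SA v = v` for any `v` that is `A`-orthogonal to the
column space of `Φ` (i.e. `ΦᵀA v = 0`).  Hence `SA` is the projection onto the
`A`-orthogonal complement of the FEM basis. -/
theorem bfem_covariance_projection
    (N n : ℕ)
    (A : Matrix (Fin N) (Fin N) ℝ) (hAsymm : A.IsSymm) (hApd : A.PosDef)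
    (Φ : Matrix (Fin N) (Fin n) ℝ) (hΦ : Function.Injective Φ.mulVec)
    (K : Matrix (Fin n) (Fin n) ℝ) (hK : K = Φᵀ * A * Φ)
    (S : Matrix (Fin N) (Fin N) ℝ) (hS : S = A⁻¹ - Φ * K⁻¹ * Φᵀ) :
    S * A * Φ = 0 ∧
      (S * A) * (S * A) = S * A ∧
      ∀ v : Fin N → ℝ, Φᵀ *ᵥ (A *ᵥ v) = 0 → (S * A) *ᵥ v = v :=
  bfem_covariance_projection_general N n A hApd Φ hΦ K hK S hS
end
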